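/- Localization identities for the (n,n) quantum secret sharing code on the star graph (Proposition 7): let n ≥ 2, let S_n be the star graph on {1,…,n} with centre 1, and for α, β ∈ ℂ let |S_g⟩ := α|G_{(0,0,…,0)}⟩ + β|G_{(1,0,…,0)}⟩ ∈ H_n. Then, up to the canonical reordering of tensor factors: (i) |S_g⟩ = 2^{−(n−1)/2} ∑_{m ∈ {0,1}^{n−1}} |m⟩_{2,…,n} ⊗ Z^{m_2⊕⋯⊕m_n}(α|+⟩ + β|−⟩)_1, where |±⟩ := (|0⟩ ± |1⟩)/√2; and (ii) for every leaf i ∈ {2,…,n}, |S_g⟩ = 2^{−1/2}( |h_{(0,0,…,0)}⟩ ⊗ (α|0⟩ + β|1⟩)_i + |h_{(1,0,…,0)}⟩ ⊗ (β|0⟩ + α|1⟩)_i ), where h is the star graph on {1,…,n}∖{i} with centre 1 and the label 1 sits on vertex 1. Hence measuring the other players' qubits in the Z basis (for (i)) or the stated bases (for (ii)) localizes the quantum secret α|0⟩+β|1⟩ onto a single chosen player up to a known local correction. -/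

import Mathlib

noncomputable section

open scoped ComplexConjugate

/-- The Hilbert space of qubits indexed by `V`, as functions from bit strings to `ℂ`. -/
abbrev QState (V : Type) : Type := (V → Fin 2) → ℂ

/-- The diagonal operator with diagonal entries `d`. -/
def diagOp {V : Type} (d : (V → Fin 2) → ℂ) : QState V →ₗ[ℂ] QState V where
  toFun f := fun x => d x * f x
  map_add' f g := by funext x; simp [mul_add]
  map_smul' c f := by funext x; simp [smul_eq_mul]; ring

/-- The Pauli `Z` operator on qubit `i`. -/
def Zop {V : Type} (i : V) : QState V →ₗ[ℂ] QState V :=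
  diagOp fun x => (-1 : ℂ) ^ (x i : ℕ)

/-- The Pauli `X` operator on qubit `i` (bit flip). -/
def Xop {V : Type} [DecidableEq V] (i : V) : QState V →ₗ[ℂ] QState V where
  toFun f := fun x => f (Function.update x i (x i + 1))
  map_add' f g := rfl
  map_smul' c f := rfl

/-- The phase gate `S` on qubit `i`, sending `|x⟩` to `(-i)^(x i) |x⟩`. -/
def Sop {V : Type} (i : V) : QState V →ₗ[ℂ] QState V :=
  diagOp fun x => (-Complex.I) ^ (x i : ℕ)

/-- The Pauli `Y` operator on qubit `i`, `Y = i·X·Z`. -/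
def Yop {V : Type} [DecidableEq V] (i : V) : QState V →ₗ[ℂ] QState V :=
  Complex.I • (Xop i ∘ₗ Zop i)

/-- `qVal G x` is the number of edges of `G` both of whose endpoints carry bit 1 in `x`. -/
def qVal {V : Type} (G : SimpleGraph V) (x : V → Fin 2) : ℕ :=
  Nat.card {e : Sym2 V // e ∈ G.edgeSet ∧ ∀ v ∈ e, x v = 1}

/-- The graph state `|G⟩`, with amplitudes `2^{-n/2} (-1)^{q_G(x)}`. -/
def graphState {V : Type} [Fintype V] (G : SimpleGraph V) : QState V :=
  fun x => (((Real.sqrt 2)⁻¹ ^ Fintype.card V : ℝ) : ℂ) * (-1 : ℂ) ^ qVal G x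

/-- The labeled/encoded graph state `|𝒢_ℓ⟩ = (∏_i Z_i^{ℓ_i}) (∏_{j ∈ Vsq} S_j) |G⟩`,
with square-vertex set `Vsq`. -/
def encSq {V : Type} [Fintype V] (G : SimpleGraph V) (Vsq : Set V) (ℓ : V → Fin 2) : QState V :=
  fun x => (-1 : ℂ) ^ Nat.card {i : V // ℓ i = 1 ∧ x i = 1}
    * (-Complex.I) ^ Nat.card {j : V // j ∈ Vsq ∧ x j = 1}
    * graphState G x

/-- The encoded graph state `|G_ℓ⟩` (no square vertices). -/
def encG {V : Type} [Fintype V] (G : SimpleGraph V) (ℓ : V → Fin 2) : QState V :=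
  encSq G ∅ ℓ

open Classical in
/-- The stabilizer operator of vertex `i`: `X_i ∏_{j ∈ N_i} Z_j` for circular vertices,
`Y_i ∏_{j ∈ N_i} Z_j` for square vertices (`i ∈ Vsq`). -/
def Kop {V : Type} [DecidableEq V] (G : SimpleGraph V) (Vsq : Set V) (i : V) :
    QState V →ₗ[ℂ] QState V :=
  (if i ∈ Vsq then Yop i else Xop i) ∘ₗ
    diagOp fun x => (-1 : ℂ) ^ Nat.card {j : V // G.Adj i j ∧ x j = 1}

/-- Merge a bit string on `P` with a bit string on the complement of `P`. -/
def mergeBits {V : Type} [DecidableEq V] (P : Finset V) (a : {i // i ∈ P} → Fin 2)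
    (c : {i // i ∉ P} → Fin 2) : V → Fin 2 :=
  fun i => if h : i ∈ P then a ⟨i, h⟩ else c ⟨i, h⟩

/-- The reduced density matrix of the pure state `ψ` on the qubits in `P`:
`(a, b) ↦ ∑_c ⟨a⊔c|ψ⟩⟨ψ|b⊔c⟩`. -/
def red {V : Type} [Fintype V] [DecidableEq V] (P : Finset V) (ψ : QState V) :
    ({i // i ∈ P} → Fin 2) → ({i // i ∈ P} → Fin 2) → ℂ :=
  fun a b => ∑ c : {i // i ∉ P} → Fin 2, ψ (mergeBits P a c) * conj (ψ (mergeBits P b c))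

/-- The computational basis vector `|y⟩`. -/
def basisVec {V : Type} [Fintype V] [DecidableEq V] (y : V → Fin 2) : QState V :=
  fun x => if x = y then 1 else 0

/-- The matrix entry `⟨x|A|y⟩` of an operator. -/
def opEntry {V : Type} [Fintype V] [DecidableEq V] (A : QState V →ₗ[ℂ] QState V)
    (x y : V → Fin 2) : ℂ := A (basisVec y) x

/-- `A` acts trivially outside `P`: it equals `M ⊗ Id` for some operator `M` on the
qubits in `P`. -/
def trivialOutside {V : Type} [Fintype V] [DecidableEq V] (P : Finset V)
    (A : QState V →ₗ[ℂ] QState V) : Prop :=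
  ∃ M : ({i // i ∈ P} → Fin 2) → ({i // i ∈ P} → Fin 2) → ℂ,
    ∀ a b c c', opEntry A (mergeBits P a c) (mergeBits P b c') = if c = c' then M a b else 0

/-- The product `∏_{i ∈ T} K_i` of (commuting) operators, taken in sorted order. -/
def prodOps {V : Type} [LinearOrder V] (T : Finset V)
    (K : V → QState V →ₗ[ℂ] QState V) : QState V →ₗ[ℂ] QState V :=
  (T.sort (· ≤ ·)).foldr (fun i acc => K i ∘ₗ acc) LinearMap.id


/-- The star graph (nGHZM graph) on `Fin n` with centre `0`. -/
def starG (n : ℕ) [NeZero n] : SimpleGraph (Fin n) where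
  Adj a b := a ≠ b ∧ (a = 0 ∨ b = 0)
  symm := by constructor; intro a b h; exact ⟨h.1.symm, h.2.symm⟩
  loopless := by constructor; intro a h; exact h.1 rfl

/-- Components of `|+⟩ = (|0⟩+|1⟩)/√2`. -/
def plusC (_ : Fin 2) : ℂ := (((Real.sqrt 2)⁻¹ : ℝ) : ℂ)

/-- Components of `|−⟩ = (|0⟩−|1⟩)/√2`. -/
def minusC (z : Fin 2) : ℂ := (((Real.sqrt 2)⁻¹ : ℝ) : ℂ) * (-1 : ℂ) ^ (z : ℕ)

/-!
On a star with centre `c`, the edges with both ends set are the edges `c j` with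
`x c = x j = 1`, so `q_G(x) = x_c · N(x)` where `N(x)` counts the set leaves. Hence every
amplitude of `α|G_0⟩ + β|G_{e_c}⟩` is `2^{-n/2} (-1)^{x_c N(x)} (α + (-1)^{x_c} β)`, which is
identity (i). For (ii), the graph induced on the other vertices is again a star with centre `c`
whose leaf count misses only `x_i`; the leftover phase `(-1)^{x_c x_i}` is absorbed by
exchanging `α` and `β` when `x_i = 1`.
-/

def IsStar {V : Type} (G : SimpleGraph V) (c : V) : Prop :=
  ∀ a b, G.Adj a b ↔ a ≠ b ∧ (a = c ∨ b = c)

lemma isStar_starG (n : ℕ) [NeZero n] : IsStar (starG n) 0 := fun _ _ => Iff.rfl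

lemma IsStar.induce {V : Type} {G : SimpleGraph V} {c : V} (h : IsStar G c) {s : Set V}
    (hc : c ∈ s) : IsStar (G.induce s) ⟨c, hc⟩ := by
  intro a b
  simp only [SimpleGraph.comap_adj, Function.Embedding.coe_subtype, ne_eq, Subtype.ext_iff]
  exact h a b

lemma natCard_and_eq {V : Type} (P : V → Prop) [DecidablePred P] (i : V) :
    Nat.card {j // P j ∧ j = i} = if P i then 1 else 0 := by
  by_cases hi : P i
  · rw [if_pos hi, Nat.card_eq_one_iff_unique]
    exact ⟨⟨fun a b => Subtype.ext (a.2.2.trans b.2.2.symm)⟩, ⟨⟨i, hi, rfl⟩⟩⟩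
  · rw [if_neg hi]
    exact @Nat.card_of_isEmpty _ ⟨fun j => hi (j.2.2 ▸ j.2.1)⟩

lemma natCard_eq_natCard_ne_add {V : Type} [Finite V] (p : V → Prop) (i : V) :
    Nat.card {j // p j} = Nat.card {j : ↥{j | j ≠ i} // p j} + Nat.card {j // p j ∧ j = i} := by
  classical
  rw [← Nat.card_congr (Equiv.sumCompl fun j : {j // p j} => j.1 ≠ i), Nat.card_sum]
  congr 1
  · exact Nat.card_congr ⟨fun j => ⟨⟨j.1.1, j.2⟩, j.1.2⟩, fun j => ⟨⟨j.1.1, j.2⟩, j.1.2⟩,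
      fun _ => rfl, fun _ => rfl⟩
  · exact Nat.card_congr ⟨fun j => ⟨j.1.1, j.1.2, not_not.mp j.2⟩,
      fun j => ⟨⟨j.1, j.2.1⟩, not_not.mpr j.2.2⟩, fun _ => rfl, fun _ => rfl⟩

lemma natCard_eq_one_and_eq_one_of_ne_eq_zero {V : Type} {c : V} {ℓ : V → Fin 2}
    (hℓ : ∀ i ≠ c, ℓ i = 0) (x : V → Fin 2) :
    Nat.card {i // ℓ i = 1 ∧ x i = 1} = ℓ c * x c := by
  classical
  have hsupp : ∀ i, ℓ i = 1 ∧ x i = 1 ↔ (ℓ i = 1 ∧ x i = 1) ∧ i = c := fun i =>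
    ⟨fun hi => ⟨hi, by_contra fun hic => by simp [hℓ i hic] at hi⟩, And.left⟩
  rw [Nat.card_congr (Equiv.subtypeEquivRight hsupp), natCard_and_eq]
  obtain hℓc | hℓc : ℓ c = 0 ∨ ℓ c = 1 := by omega
  all_goals obtain hxc | hxc : x c = 0 ∨ x c = 1 := by omega
  all_goals simp [hℓc, hxc]

lemma natCard_ne_and_eq_one_eq_add {V : Type} [Finite V] (x : V → Fin 2) {c i : V}
    (hi : i ≠ c) :
    Nat.card {j // j ≠ c ∧ x j = 1} =
      Nat.card {j : ↥{j | j ≠ i} // j.1 ≠ c ∧ x j = 1} + x i := by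
  classical
  rw [natCard_eq_natCard_ne_add _ i, natCard_and_eq]
  obtain hxi | hxi : x i = 0 ∨ x i = 1 := by omega
  all_goals simp [hi, hxi]

lemma encG_apply {V : Type} [Fintype V] (G : SimpleGraph V) (ℓ x : V → Fin 2) :
    encG G ℓ x = (-1) ^ Nat.card {i // ℓ i = 1 ∧ x i = 1} * graphState G x := by
  simp [encG, encSq]

lemma neg_one_pow_mul_mul_add_eq_ite (a b : Fin 2) (α β : ℂ) :
    (-1) ^ ((a : ℕ) * b) * (α + β * (-1) ^ (a : ℕ)) =
      (if b = 0 then α else β) + (-1) ^ (a : ℕ) * (if b = 0 then β else α) := by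
  fin_cases a <;> fin_cases b <;> simp; ring

namespace IsStar

variable {V : Type} {G : SimpleGraph V} {c : V}

lemma setOf_edge_all_one_eq_image (h : IsStar G c) (x : V → Fin 2) :
    {e | e ∈ G.edgeSet ∧ ∀ v ∈ e, x v = 1} =
      (fun j => s(c, j)) '' {j | j ≠ c ∧ x c = 1 ∧ x j = 1} := by
  ext e
  induction e using Sym2.ind with
  | _ a b =>
    simp only [Set.mem_ofPred_eq, SimpleGraph.mem_edgeSet, h a b, Sym2.mem_iff,
      forall_eq_or_imp, forall_eq, Set.mem_image, Sym2.eq_iff]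
    grind

lemma qVal_eq (h : IsStar G c) (x : V → Fin 2) :
    qVal G x = x c * Nat.card {j // j ≠ c ∧ x j = 1} := by
  calc qVal G x = Set.ncard {j | j ≠ c ∧ x c = 1 ∧ x j = 1} := by
        rw [qVal, ← Set.ncard_image_of_injective _ (fun _ _ => Sym2.congr_right.mp),
          ← h.setOf_edge_all_one_eq_image]
        rfl
    _ = x c * Nat.card {j // j ≠ c ∧ x j = 1} := by
        obtain hc | hc : x c = 0 ∨ x c = 1 := by omega
        · simp [hc]
        · simp only [hc, Fin.val_one, one_mul, true_and]
          rfl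

lemma encG_apply [Fintype V] (h : IsStar G c) {ℓ : V → Fin 2} (hℓ : ∀ i ≠ c, ℓ i = 0)
    (x : V → Fin 2) :
    encG G ℓ x = (((Real.sqrt 2)⁻¹ ^ Fintype.card V : ℝ) : ℂ) *
      (-1) ^ ((x c : ℕ) * (Nat.card {j // j ≠ c ∧ x j = 1} + ℓ c)) := by
  rw [_root_.encG_apply, natCard_eq_one_and_eq_one_of_ne_eq_zero hℓ, graphState, h.qVal_eq]
  ring

lemma encG_induce_apply (h : IsStar G c) {s : Set V} [Fintype s] (hc : c ∈ s) {ℓ : s → Fin 2}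
    (hℓ : ∀ j : s, j.1 ≠ c → ℓ j = 0) (x : V → Fin 2) :
    encG (G.induce s) ℓ (fun j => x j) = (((Real.sqrt 2)⁻¹ ^ Fintype.card s : ℝ) : ℂ) *
      (-1) ^ ((x c : ℕ) * (Nat.card {j : s // j.1 ≠ c ∧ x j = 1} + ℓ ⟨c, hc⟩)) := by
  rw [(h.induce hc).encG_apply fun j hj => hℓ j fun hjc => hj (Subtype.ext hjc)]
  simp only [ne_eq, Subtype.ext_iff]

lemma smul_encG_add_smul_encG_apply [Fintype V] [DecidableEq V] (h : IsStar G c) (α β : ℂ)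
    (x : V → Fin 2) :
    (α • encG G (fun _ => 0) + β • encG G fun j => if j = c then 1 else 0) x =
      (((Real.sqrt 2)⁻¹ ^ Fintype.card V : ℝ) : ℂ) *
        (-1) ^ ((x c : ℕ) * Nat.card {j // j ≠ c ∧ x j = 1}) * (α + β * (-1) ^ (x c : ℕ)) := by
  simp only [Pi.add_apply, Pi.smul_apply, smul_eq_mul, h.encG_apply (fun _ _ => rfl),
    h.encG_apply (fun _ hi => if_neg hi), if_pos, Fin.val_zero, Fin.val_one, add_zero,
    mul_add, mul_one, pow_add]
  ring

end IsStar

/-- localization identities for the (n,n) QQ code on the star graph,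
n = m+2 ≥ 2 players, centre 0: for `|S_g⟩ = α|G_{0…0}⟩ + β|G_{10…0}⟩`, stated
pointwise on the computational basis:
(i) `|S_g⟩ = 2^{−(n−1)/2} ∑_m |m⟩_{leaves} ⊗ Z^{⊕ m_j}(α|+⟩ + β|−⟩)_centre`;
(ii) for every leaf `i`,
`|S_g⟩ = 2^{−1/2}(|h_{0…0}⟩ ⊗ (α|0⟩+β|1⟩)_i + |h_{10…0}⟩ ⊗ (β|0⟩+α|1⟩)_i)`,
where `h` is the star on the remaining vertices with centre 0 and the label 1 sits on
the centre. -/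
theorem star_qq_localization (m : ℕ) (α β : ℂ) :
    (∀ x : Fin (m + 2) → Fin 2,
      (α • encG (starG (m + 2)) (fun _ => 0) +
          β • encG (starG (m + 2)) fun j => if j = 0 then 1 else 0) x =
        (((Real.sqrt 2)⁻¹ ^ (m + 1) : ℝ) : ℂ) *
          ((-1 : ℂ) ^ ((Nat.card {j : Fin (m + 2) // j ≠ 0 ∧ x j = 1} % 2) * (x 0 : ℕ)) *
            (α * plusC (x 0) + β * minusC (x 0)))) ∧
    (∀ i : Fin (m + 2), i ≠ 0 → ∀ x : Fin (m + 2) → Fin 2,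
      (α • encG (starG (m + 2)) (fun _ => 0) +
          β • encG (starG (m + 2)) fun j => if j = 0 then 1 else 0) x =
        (((Real.sqrt 2)⁻¹ : ℝ) : ℂ) *
          (encG ((starG (m + 2)).induce {j | j ≠ i}) (fun _ => 0) (fun j => x j.1) *
              (if x i = 0 then α else β) +
            encG ((starG (m + 2)).induce {j | j ≠ i})
                (fun j => if j.1 = 0 then 1 else 0) (fun j => x j.1) *
              (if x i = 0 then β else α))) := by
  have hS := isStar_starG (m + 2)
  refine ⟨fun x => ?_, fun i hi x => ?_⟩
  · rw [hS.smul_encG_add_smul_encG_apply, pow_mul (-1 : ℂ) (_ % 2),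
      ← neg_one_pow_eq_pow_mod_two, ← pow_mul, mul_comm (Nat.card _)]
    simp only [plusC, minusC, Fintype.card_fin]
    push_cast
    ring
  · have hcard : Fintype.card ↥{j : Fin (m + 2) | j ≠ i} = m + 1 := by
      simp [Fintype.card_subtype, Finset.filter_ne']
    rw [hS.smul_encG_add_smul_encG_apply, hS.encG_induce_apply hi.symm (fun _ _ => rfl),
      hS.encG_induce_apply hi.symm (fun _ hj => if_neg hj),
      natCard_ne_and_eq_one_eq_add x hi, hcard, Fintype.card_fin]
    simp only [Fin.val_zero, add_zero, Fin.val_one, if_pos, Complex.ofReal_pow]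
    linear_combination (((Real.sqrt 2)⁻¹ : ℝ) : ℂ) ^ (m + 2) *
      (-1) ^ ((x 0 : ℕ) * Nat.card {j : ↥{j | j ≠ i} // j.1 ≠ 0 ∧ x j = 1}) *
      neg_one_pow_mul_mul_add_eq_ite (x 0) (x i) α β

end
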